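/- Let k, l ≥ 1. In the braid group B_{k+l}, one has χ(t_{k,l}) = t_{l,k}. -/

import Mathlib

/-!
Formalization of identities in the Artin braid group `B_m`.

We encode "the identity `w₁ = w₂` holds in the braid group `B_m`" via the universal
property of the presented group: it holds in `B_m` iff for every group `G` and every
assignment `σ : ℕ → G` of the generators `σ_1, …, σ_{m-1}` satisfying the defining
braid relations of `B_m`, the corresponding products in `G` are equal.

Braid words are recorded as lists of (1-based) generator indices; `wordProd σ w`
is the corresponding product.  The anti-automorphism `χ` (which fixes each
generator and reverses the order of the letters of a word) corresponds to
`List.reverse` on words, and the shift homomorphism `r_a : σ_i ↦ σ_{i+a}`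
corresponds to `rWord a` on words.
-/

namespace Braid

variable {G : Type*} [Group G]

/-- The product in `G` of the braid word `w` (a list of 1-based generator indices). -/
def wordProd (σ : ℕ → G) (w : List ℕ) : G := (w.map σ).prod

/-- `σ 1, …, σ (m-1)` satisfy the defining relations of the Artin braid group `B_m`:
`σ_i σ_{i+1} σ_i = σ_{i+1} σ_i σ_{i+1}` for `1 ≤ i ≤ m-2`, and
`σ_i σ_j = σ_j σ_i` for `|i - j| ≥ 2`, `1 ≤ i, j ≤ m-1`. -/
def IsBraidRep (m : ℕ) (σ : ℕ → G) : Prop :=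
  (∀ i, 1 ≤ i → i + 2 ≤ m → σ i * σ (i + 1) * σ i = σ (i + 1) * σ i * σ (i + 1)) ∧
  (∀ i j, 1 ≤ i → i + 2 ≤ j → j + 1 ≤ m → σ i * σ j = σ j * σ i)

/-- The word `[1, 2, …, j]` representing `b_j = σ_1 σ_2 ⋯ σ_j` (with `b_0 = e`). -/
def bWord (j : ℕ) : List ℕ := List.range' 1 j

/-- The word representing the superselection braid `β_n = b_{n-1} b_{n-2} ⋯ b_1`
(with `β_1 = β_0 = e`). -/
def betaWord : ℕ → List ℕ
  | 0 => []
  | n + 1 => bWord n ++ betaWord n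

/-- The shift `r_a : σ_i ↦ σ_{i+a}` on braid words. -/
def rWord (a : ℕ) (w : List ℕ) : List ℕ := w.map (· + a)

/-- The word representing `t_{k,l} = r_0(χ(b_l)) · r_1(χ(b_l)) ⋯ r_{k-1}(χ(b_l))`,
the braid clockwise exchanging a block of `k` strands with a block of `l` strands. -/
def tWord : ℕ → ℕ → List ℕ
  | 0, _ => []
  | k + 1, l => tWord k l ++ rWord k (bWord l).reverse

lemma wordProd_append (σ : ℕ → G) (w₁ w₂ : List ℕ) :
    wordProd σ (w₁ ++ w₂) = wordProd σ w₁ * wordProd σ w₂ := by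
  simp [wordProd]

lemma wordProd_cons (σ : ℕ → G) (a : ℕ) (w : List ℕ) :
    wordProd σ (a :: w) = σ a * wordProd σ w := by
  simp [wordProd]

lemma rWord_append (a : ℕ) (w₁ w₂ : List ℕ) :
    rWord a (w₁ ++ w₂) = rWord a w₁ ++ rWord a w₂ := by
  simp [rWord]

lemma rWord_rWord (a b : ℕ) (w : List ℕ) :
    rWord a (rWord b w) = rWord (b + a) w := by
  simp only [rWord, List.map_map]
  congr 1
  funext x
  simp only [Function.comp]
  omega

lemma rWord_zero (w : List ℕ) : rWord 0 w = w := by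
  simp [rWord]

lemma rWord_range' (a s n : ℕ) : rWord a (List.range' s n) = List.range' (s + a) n := by
  rw [rWord, show ((· + a) : ℕ → ℕ) = (a + ·) from funext fun x => by omega,
    List.map_add_range']
  congr 1
  omega

lemma wordProd_rWord (σ : ℕ → G) (a : ℕ) (w : List ℕ) :
    wordProd σ (rWord a w) = wordProd (fun i => σ (i + a)) w := by
  simp only [wordProd, rWord, List.map_map]
  rfl

lemma isBraidRep_mono {m n : ℕ} {σ : ℕ → G} (h : IsBraidRep m σ) (hn : n ≤ m) :
    IsBraidRep n σ :=
  ⟨fun i h1 h2 => h.1 i h1 (le_trans h2 hn),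
   fun i j h1 h2 h3 => h.2 i j h1 h2 (le_trans h3 hn)⟩

lemma isBraidRep_shift {m : ℕ} {σ : ℕ → G} (h : IsBraidRep (m + 1) σ) :
    IsBraidRep m (fun i => σ (i + 1)) := by
  constructor
  · intro i h1 h2
    have := h.1 (i + 1) (by omega) (by omega)
    simpa [add_right_comm] using this
  · intro i j h1 h2 h3
    have := h.2 (i + 1) (j + 1) (by omega) (by omega) (by omega)
    simpa using this

lemma tWord_zero_right : ∀ n, tWord n 0 = []
  | 0 => rfl
  | n + 1 => by simp [tWord, tWord_zero_right n, bWord, rWord]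

lemma tWord_succ_front (k : ℕ) :
    ∀ n, tWord (n + 1) k = (bWord k).reverse ++ rWord 1 (tWord n k)
  | 0 => by simp [tWord, rWord_zero, rWord]
  | n + 1 => by
    calc tWord (n + 1 + 1) k
        = ((bWord k).reverse ++ rWord 1 (tWord n k)) ++ rWord (n + 1) (bWord k).reverse := by
          rw [show tWord (n + 1 + 1) k
              = tWord (n + 1) k ++ rWord (n + 1) (bWord k).reverse from rfl,
            tWord_succ_front k n]
      _ = (bWord k).reverse ++ rWord 1 (tWord n k ++ rWord n (bWord k).reverse) := by
          rw [rWord_append, rWord_rWord, List.append_assoc]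
      _ = (bWord k).reverse ++ rWord 1 (tWord (n + 1) k) := rfl

/-- Products of words whose letters pairwise commute (under `σ`) commute. -/
lemma wordProd_comm (σ : ℕ → G) (w₁ w₂ : List ℕ)
    (h : ∀ x ∈ w₁, ∀ y ∈ w₂, σ x * σ y = σ y * σ x) :
    wordProd σ w₁ * wordProd σ w₂ = wordProd σ w₂ * wordProd σ w₁ := by
  induction w₁ with
  | nil => simp [wordProd]
  | cons a w ih =>
    have ha : ∀ y ∈ w₂, σ a * σ y = σ y * σ a := h a List.mem_cons_self
    have hcomm : σ a * wordProd σ w₂ = wordProd σ w₂ * σ a := by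
      clear ih h
      induction w₂ with
      | nil => simp [wordProd]
      | cons b w' ih' =>
        rw [wordProd_cons, ← mul_assoc, ha b List.mem_cons_self, mul_assoc,
          ih' (fun y hy => ha y (List.mem_cons_of_mem b hy)), mul_assoc]
    rw [wordProd_cons, mul_assoc,
      ih (fun x hx y hy => h x (List.mem_cons_of_mem a hx) y hy), ← mul_assoc, hcomm,
      mul_assoc]

/-- Key step: `(σ_{k+1} ⋯ σ_{k+l}) · t_{l,k} = t_{l,k+1}` in `B_{k+l+1}`. -/
lemma key_step : ∀ l k : ℕ, ∀ σ : ℕ → G, IsBraidRep (k + l + 1) σ →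
    wordProd σ (List.range' (k + 1) l) * wordProd σ (tWord l k) = wordProd σ (tWord l (k + 1))
  | 0, k, σ, _ => by simp [tWord, wordProd]
  | l + 1, k, σ, h => by
    have hb : (bWord (k + 1)).reverse = (k + 1) :: (bWord k).reverse := by
      simp [bWord, List.range'_1_concat]
      omega
    have hσ' : IsBraidRep (k + l + 1) (fun i => σ (i + 1)) := by
      apply isBraidRep_shift
      exact isBraidRep_mono h (by omega)
    have IH := key_step l k (fun i => σ (i + 1)) hσ'
    have hr : List.range' (k + 1 + 1) l = rWord 1 (List.range' (k + 1) l) := by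
      rw [rWord_range']
    have hcomm : wordProd σ (List.range' (k + 1 + 1) l) * wordProd σ (bWord k).reverse
        = wordProd σ (bWord k).reverse * wordProd σ (List.range' (k + 1 + 1) l) := by
      apply wordProd_comm
      intro x hx y hy
      rw [List.mem_range'_1] at hx
      rw [List.mem_reverse] at hy
      have hy' : 1 ≤ y ∧ y < 1 + k := by
        simpa [bWord, List.mem_range'_1] using hy
      exact (h.2 y x hy'.1 (by omega) (by omega)).symm
    rw [tWord_succ_front k l, tWord_succ_front (k + 1) l, List.range'_succ, wordProd_cons,
      wordProd_append, wordProd_append, hb, wordProd_cons, hr, wordProd_rWord,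
      wordProd_rWord, wordProd_rWord, ← IH, ← wordProd_rWord, ← wordProd_rWord, ← hr]
    rw [mul_assoc, ← mul_assoc (wordProd σ (List.range' (k + 1 + 1) l)), hcomm]
    group

theorem rev_t_eq_t_aux (l : ℕ) (σ : ℕ → G) :
    ∀ k, IsBraidRep (k + l) σ →
      wordProd σ (tWord k l).reverse = wordProd σ (tWord l k)
  | 0, _ => by simp [tWord, tWord_zero_right, wordProd]
  | k + 1, h => by
    show wordProd σ (tWord k l ++ rWord k (bWord l).reverse).reverse = _
    have hrev : (rWord k (bWord l).reverse).reverse = List.range' (k + 1) l := by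
      rw [rWord, List.map_reverse, List.reverse_reverse, ← rWord, bWord, rWord_range']
      congr 1
      omega
    rw [List.reverse_append, wordProd_append, hrev,
      rev_t_eq_t_aux l σ k (isBraidRep_mono h (by omega))]
    exact key_step l k σ (by rwa [show k + l + 1 = k + 1 + l from by omega])

/-- Let `k, l ≥ 1`.  In the braid group `B_{k+l}`, one has `χ(t_{k,l}) = t_{l,k}`. -/
theorem rev_t_eq_t (k l : ℕ) (hk : 1 ≤ k) (hl : 1 ≤ l) (σ : ℕ → G)
    (h : IsBraidRep (k + l) σ) :
    wordProd σ (tWord k l).reverse = wordProd σ (tWord l k) := by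
  exact rev_t_eq_t_aux l σ k h

end Braid
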